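/- arXiv:0912.0448 — 2 statements merged into one kernel-verified Lean document; each statement's English description precedes it below -/
import Mathlib

section
/- For a hackenbush string: (a) if all counters are blue, the value is a positive integer n (n = length), Red has no move, and Blue can remove the top counter to decrease the value by 1; (b) symmetrically for all-red strings Red can increase the value by 1; (c) if the string contains both colors, its value equals a/2^k with a odd and k ≥ 1, removing Blue's topmost blue counter (and everything above) decreases the value by exactly 1/2^k, and removing Red's topmost red counter (and everything above) increases the value by exactly 1/2^k. -/
def bvalAux : Bool → Bool → ℚ → List Bool → ℚ
  | _, _, _, [] => 0
  | changed, prev, w, b :: t =>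
      let changed' := changed || (b != prev)
      let w' := if changed' then w / 2 else 1
      (if b then w' else -w') + bvalAux changed' b w' t

/-- Berlekamp's value of a hackenbush string (`true` = blue, `false` = red,
listed bottom to top). -/
def bval : List Bool → ℚ
  | [] => 0
  | b :: t => (if b then 1 else -1) + bvalAux false b 1 t

/-!
A string is a run of `m + 1` counters of one colour `c` followed by a tail `s` that is empty or
starts with the other colour. Its value is `±(m + 1)` plus the tail read as a binary fraction
`0.s₁s₂…` with digits `±1`, which for nonempty `s` is an odd numerator over `2 ^ |s|`. A move
removes a counter of colour `b` together with a block of counters of colour `!b` above it; the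
weights of that block telescope, `w - w/2 - ⋯ - w/2^r = w/2^r`, so the move changes the value by
exactly the weight `1/2^|s|` of the top counter.
-/

def counterSign (b : Bool) : ℚ := if b then 1 else -1

@[simp] lemma counterSign_true : counterSign true = 1 := rfl

@[simp] lemma counterSign_false : counterSign false = -1 := rfl

lemma counterSign_not (b : Bool) : counterSign (!b) = -counterSign b := by
  cases b <;> simp

def signedBinary : List Bool → ℚ
  | [] => 0
  | b :: t => (counterSign b + signedBinary t) / 2

lemma bvalAux_true_eq_mul_signedBinary (p : Bool) (w : ℚ) (t : List Bool) :
    bvalAux true p w t = w * signedBinary t := by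
  induction t generalizing p w with
  | nil => simp [bvalAux, signedBinary]
  | cons b t ih => cases b <;> simp [bvalAux, signedBinary, ih] <;> ring

lemma signedBinary_append (u v : List Bool) :
    signedBinary (u ++ v) = signedBinary u + signedBinary v / 2 ^ u.length := by
  induction u with
  | nil => simp [signedBinary]
  | cons b u ih => simp only [List.cons_append, signedBinary, ih, List.length_cons]; ring

lemma signedBinary_replicate (b : Bool) (n : ℕ) :
    signedBinary (List.replicate n b) = counterSign b * (1 - 1 / 2 ^ n) := by
  induction n with
  | zero => simp [signedBinary]
  | succ n ih => simp only [List.replicate_succ, signedBinary, ih]; ring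

lemma signedBinary_cons_replicate_not (b : Bool) (r : ℕ) :
    signedBinary (b :: List.replicate r (!b)) = counterSign b / 2 ^ (r + 1) := by
  simp only [signedBinary, signedBinary_replicate, counterSign_not]; ring

lemma exists_odd_signedBinary_cons (b : Bool) (t : List Bool) :
    ∃ a : ℤ, Odd a ∧ signedBinary (b :: t) = a / 2 ^ (t.length + 1) := by
  induction t generalizing b with
  | nil => cases b <;> [exact ⟨-1, by decide, by simp [signedBinary]⟩;
      exact ⟨1, odd_one, by simp [signedBinary]⟩]
  | cons b' t ih =>
    obtain ⟨a, ha, hval⟩ := ih b'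
    have hpow : Even ((2 : ℤ) ^ (t.length + 1)) := (Int.even_pow' (by omega)).mpr even_two
    refine ⟨(if b then 1 else -1) * 2 ^ (t.length + 1) + a, (hpow.mul_left _).add_odd ha, ?_⟩
    rw [signedBinary, hval, List.length_cons]
    cases b <;> simp [counterSign] <;> field_simp <;> ring

lemma bvalAux_false_replicate_append (c : Bool) (n : ℕ) (s : List Bool) (hs : s.head? ≠ some c) :
    bvalAux false c 1 (List.replicate n c ++ s) = counterSign c * n + signedBinary s := by
  induction n with
  | zero =>
    cases s with
    | nil => simp [bvalAux, signedBinary]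
    | cons x t =>
      obtain rfl : x = !c := by cases x <;> cases c <;> simp_all
      cases c <;> simp [bvalAux, bvalAux_true_eq_mul_signedBinary, signedBinary] <;> ring
  | succ n ih =>
    rw [List.replicate_succ, List.cons_append, bvalAux]
    cases c <;> simp <;> rw [ih] <;> simp <;> ring

lemma bval_replicate_append (c : Bool) (n : ℕ) (s : List Bool) (hs : s.head? ≠ some c) :
    bval (List.replicate (n + 1) c ++ s) = counterSign c * (n + 1) + signedBinary s := by
  rw [List.replicate_succ, List.cons_append, bval, bvalAux_false_replicate_append c n s hs]
  cases c <;> simp <;> ring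

lemma bval_replicate (c : Bool) (n : ℕ) : bval (List.replicate n c) = counterSign c * n := by
  cases n with
  | zero => simp [bval]
  | succ n => simpa [signedBinary] using bval_replicate_append c n [] (by simp)

lemma exists_replicate_append (c : Bool) (t : List Bool) :
    ∃ n s, c :: t = List.replicate (n + 1) c ++ s ∧ s.head? ≠ some c := by
  induction t with
  | nil => exact ⟨0, [], by simp, by simp⟩
  | cons b t ih =>
    by_cases hb : b = c
    · obtain ⟨n, s, he, hs⟩ := ih
      refine ⟨n + 1, s, ?_, hs⟩
      rw [hb, List.replicate_succ, List.cons_append, ← he]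
    · exact ⟨0, b :: t, by simp, by simpa using hb⟩

lemma exists_odd_bval (c : Bool) (n : ℕ) (s : List Bool) (hs : s.head? ≠ some c)
    (hne : s ≠ []) :
    ∃ a : ℤ, Odd a ∧ bval (List.replicate (n + 1) c ++ s) = a / 2 ^ s.length := by
  obtain ⟨b, t, rfl⟩ := List.exists_cons_of_ne_nil hne
  obtain ⟨a, ha, hval⟩ := exists_odd_signedBinary_cons b t
  have hpow : Even ((2 : ℤ) ^ (t.length + 1)) := (Int.even_pow' (by omega)).mpr even_two
  refine ⟨(if c then 1 else -1) * (n + 1) * 2 ^ (t.length + 1) + a,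
    (hpow.mul_left _).add_odd ha, ?_⟩
  rw [bval_replicate_append c n _ hs, hval, List.length_cons]
  cases c <;> simp [counterSign] <;> field_simp

lemma bval_remove_in_tail (c b : Bool) (m r : ℕ) (u : List Bool) (hu : u.head? ≠ some c)
    (hub : (u ++ b :: List.replicate r (!b)).head? ≠ some c) :
    bval (List.replicate (m + 1) c ++ (u ++ b :: List.replicate r (!b)))
      = bval (List.replicate (m + 1) c ++ u) + counterSign b / 2 ^ (u.length + r + 1) := by
  rw [bval_replicate_append c m _ hub, bval_replicate_append c m _ hu, signedBinary_append,
    signedBinary_cons_replicate_not, add_assoc u.length, pow_add]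
  ring

lemma bval_remove_in_head (b : Bool) (m k : ℕ) :
    bval (List.replicate (m + 1) b ++ List.replicate k (!b))
      = bval (List.replicate m b) + counterSign b / 2 ^ k := by
  have hk : (List.replicate k (!b)).head? ≠ some b := by
    cases k <;> cases b <;> simp [List.replicate_succ]
  rw [bval_replicate_append b m _ hk, bval_replicate, signedBinary_replicate, counterSign_not]
  ring

lemma bval_append_cons_replicate (c b : Bool) (m r : ℕ) (u s : List Bool)
    (h : u ++ b :: List.replicate r (!b) = List.replicate (m + 1) c ++ s)
    (hs : s.head? ≠ some c) :
    bval (u ++ b :: List.replicate r (!b)) = bval u + counterSign b / 2 ^ s.length := by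
  -- The removed counter is either the top of the leading run, with the whole tail `s` of colour
  -- `!b` above it, or a counter of the tail.
  rcases List.append_eq_append_iff.mp h with ⟨v, hrep, htail⟩ | ⟨v, rfl, rfl⟩
  · cases v with
    | nil =>
      simp only [List.append_nil, List.nil_append] at hrep htail
      subst hrep htail
      simpa using bval_remove_in_tail c b m r [] (by simp) hs
    | cons x v =>
      obtain ⟨-, hu, hxv⟩ := List.append_eq_replicate_iff.mp hrep.symm
      simp only [List.length_cons, List.replicate_succ, List.cons.injEq] at hxv
      obtain ⟨rfl, hv⟩ := hxv
      rw [List.cons_append, List.cons_eq_cons] at htail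
      obtain ⟨rfl, hrest⟩ := htail
      obtain ⟨-, hv', hs'⟩ := List.append_eq_replicate_iff.mp hrest.symm
      obtain rfl : v = [] := List.eq_nil_iff_forall_not_mem.mpr fun y hy => by
        have hyc := List.eq_replicate_iff.mp hv |>.2 y hy
        have hync := List.eq_replicate_iff.mp hv' |>.2 y hy
        rw [hyc] at hync
        cases b <;> simp at hync
      have hm : u.length = m := by
        have := congrArg List.length hrep
        simp only [List.length_replicate, List.length_append, List.length_cons, List.length_nil] at this
        omega
      obtain rfl : u = List.replicate m b := by rw [← hm]; exact hu
      obtain ⟨k, rfl⟩ : ∃ k, s = List.replicate k (!b) := ⟨_, hs'⟩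
      rw [h, List.length_replicate, bval_remove_in_head]
  · have hv : v.head? ≠ some c := by
      cases v with
      | nil => simp
      | cons y v => simpa using hs
    rw [List.append_assoc, bval_remove_in_tail c b m r v hv hs, List.length_append,
      List.length_cons, List.length_replicate]
    ring_nf

lemma drop_eq_cons_replicate (l : List Bool) (b : Bool) (j : ℕ) (hj : j < l.length)
    (hb : l.getD j (!b) = b) (habove : ∀ i, j < i → i < l.length → l.getD i b = !b) :
    l.drop j = b :: List.replicate (l.length - j - 1) (!b) := by
  rw [List.drop_eq_getElem_cons hj, ← List.getD_eq_getElem l (!b) hj, hb]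
  refine congrArg _ (List.eq_replicate_iff.mpr ⟨by simp; omega, fun x hx => ?_⟩)
  obtain ⟨i, hi, rfl⟩ := List.getElem_of_mem hx
  rw [List.getElem_drop, ← List.getD_eq_getElem l b]
  exact habove _ (by omega) (by rw [List.length_drop] at hi; omega)

lemma bval_monochromatic (c : Bool) (l : List Bool) (hne : l ≠ []) (h : ∀ b ∈ l, b = c) :
    bval l = counterSign c * l.length ∧ bval l.dropLast = bval l - counterSign c := by
  have hl := List.eq_replicate_length.mpr h
  have hpos : 1 ≤ l.length := List.length_pos_iff.mpr hne
  rw [hl, List.dropLast_replicate, bval_replicate, bval_replicate, List.length_replicate,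
    Nat.cast_sub hpos]
  exact ⟨rfl, by ring⟩

lemma bval_take_of_top (l s : List Bool) (c b : Bool) (m j : ℕ)
    (hl : l = List.replicate (m + 1) c ++ s) (hs : s.head? ≠ some c) (hj : j < l.length)
    (hb : l.getD j (!b) = b) (habove : ∀ i, j < i → i < l.length → l.getD i b = !b) :
    bval (l.take j) = bval l - counterSign b / 2 ^ s.length := by
  have hsplit := List.take_append_drop j l
  rw [drop_eq_cons_replicate l b j hj hb habove] at hsplit
  have hmove := bval_append_cons_replicate c b m _ _ s (hsplit.trans hl) hs
  rw [hsplit] at hmove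
  linarith

/-- Structure theorem for hackenbush strings: (a) an all-blue string has value
its length (a positive integer), and removing the top counter (Blue's move)
decreases the value by 1; (b) symmetrically, an all-red string has value minus
its length, and Red's move on the top counter increases the value by 1; (c) a
bichromatic string has value `a/2^k` with `a` odd and `k ≥ 1`, removing Blue's
topmost blue counter together with everything above it decreases the value by
exactly `1/2^k`, and removing Red's topmost red counter together with
everything above it increases the value by exactly `1/2^k`. -/
theorem stmt12 (l : List Bool) (hne : l ≠ []) :
    ((∀ b ∈ l, b = true) →
      bval l = (l.length : ℚ) ∧ 0 < bval l ∧ bval l.dropLast = bval l - 1) ∧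
    ((∀ b ∈ l, b = false) →
      bval l = -(l.length : ℚ) ∧ bval l < 0 ∧ bval l.dropLast = bval l + 1) ∧
    ((true ∈ l) → (false ∈ l) →
      ∃ a : ℤ, ∃ k : ℕ, Odd a ∧ 1 ≤ k ∧ bval l = (a : ℚ) / 2 ^ k ∧
        (∀ j, j < l.length → l.getD j false = true →
          (∀ i, j < i → i < l.length → l.getD i true = false) →
          bval (l.take j) = bval l - 1 / 2 ^ k) ∧
        (∀ j, j < l.length → l.getD j true = false →
          (∀ i, j < i → i < l.length → l.getD i false = true) →
          bval (l.take j) = bval l + 1 / 2 ^ k)) := by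
  have hlen : (0 : ℚ) < l.length := by exact_mod_cast List.length_pos_iff.mpr hne
  refine ⟨fun h => ?_, fun h => ?_, fun hT hF => ?_⟩
  · obtain ⟨hval, hdrop⟩ := bval_monochromatic true l hne h
    rw [counterSign_true, one_mul] at hval
    exact ⟨hval, hval ▸ hlen, hdrop⟩
  · obtain ⟨hval, hdrop⟩ := bval_monochromatic false l hne h
    rw [counterSign_false, neg_one_mul] at hval
    exact ⟨hval, by linarith, by simpa using hdrop⟩
  · obtain ⟨c, t, hct⟩ := List.exists_cons_of_ne_nil hne
    obtain ⟨m, s, hrun, hs⟩ := exists_replicate_append c t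
    have hl := hct.trans hrun
    have hsne : s ≠ [] := by
      rintro rfl
      rw [hl, List.append_nil] at hT hF
      simpa using (List.eq_of_mem_replicate hT).trans (List.eq_of_mem_replicate hF).symm
    obtain ⟨a, ha, hval⟩ := exists_odd_bval c m s hs hsne
    refine ⟨a, s.length, ha, List.length_pos_iff.mpr hsne, hl ▸ hval, ?_, ?_⟩
    · intro j hj hb habove
      simpa using bval_take_of_top l s c true m j hl hs hj hb habove
    · intro j hj hb habove
      rw [bval_take_of_top l s c false m j hl hs hj hb habove, counterSign_false]
      ring
end

section
/- If the Berlekamp value of a sum of hackenbush strings is positive then Blue wins (moving first or second); if negative then Red wins; if zero then the second player wins. Equivalently: (i) from a position of value ≥ 0, every Red move yields value > 0; (ii) from a position of value > 0, Blue has a move to a position of value ≥ 0. -/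
/-- The value of a position: the sum of the values of its strings. -/
def bvalPos (s : Multiset (List Bool)) : ℚ := (s.map bval).sum

/-- A move by the player of color `c` (`true` = Blue, `false` = Red): remove a
counter of color `c` from some string together with all counters above it. -/
def HMove (c : Bool) (s t : Multiset (List Bool)) : Prop :=
  ∃ l ∈ s, ∃ j, l.getD j (!c) = c ∧ t = (l.take j) ::ₘ s.erase l

/-- `Wins w m s` : the player of color `w` wins the hackenbush position `s`
with the player of color `m` to move (a player unable to move loses). -/
inductive Wins : Bool → Bool → Multiset (List Bool) → Prop
  | myMove (w : Bool) (s t : Multiset (List Bool)) :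
      HMove w s t → Wins w (!w) t → Wins w w s
  | oppMove (w : Bool) (s : Multiset (List Bool)) :
      (∀ t, HMove (!w) s t → Wins w w t) → Wins w (!w) s

/-!
Multiply values by the sign of a colour `c`. A move of `c` strictly decreases the value, since a
counter outweighs everything above it. Conversely, if the value is positive then `c` can move to a
nonnegative value: all string values are integer multiples of the smallest top-counter weight `q`,
so the value is at least `q`, and removing the topmost `c`-counter of a string lowers the value by
exactly that string's top weight. Induction on the number of counters gives the outcomes.
-/

def colorSign (b : Bool) : ℚ := if b then 1 else -1

@[simp] lemma colorSign_true : colorSign true = 1 := rfl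

@[simp] lemma colorSign_false : colorSign false = -1 := rfl

lemma colorSign_not (b : Bool) : colorSign (!b) = -colorSign b := by cases b <;> simp

lemma colorSign_mul_self (b : Bool) : colorSign b * colorSign b = 1 := by cases b <;> simp

lemma neg_lt_colorSign_mul {x a : ℚ} (b : Bool) (h : |x| < a) : -a < colorSign b * x := by
  cases b <;> simp only [colorSign_true, colorSign_false, one_mul, neg_mul] <;>
    linarith [abs_lt.mp h]

def dyadicVal (w : ℚ) : List Bool → ℚ
  | [] => 0
  | b :: t => colorSign b * w + dyadicVal (w / 2) t

lemma abs_dyadicVal_lt (l : List Bool) {w : ℚ} (hw : 0 < w) : |dyadicVal w l| < 2 * w := by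
  induction l generalizing w with
  | nil => simpa [dyadicVal] using hw
  | cons b t ih =>
    have := abs_lt.mp (ih (half_pos hw))
    rw [dyadicVal, abs_lt]
    cases b <;> simp only [colorSign_true, colorSign_false, one_mul, neg_mul] <;> constructor <;>
      linarith

def stepWeight (changed : Bool) (w : ℚ) : ℚ := if changed then w / 2 else 1

@[simp] lemma stepWeight_true (w : ℚ) : stepWeight true w = w / 2 := rfl

@[simp] lemma stepWeight_false (w : ℚ) : stepWeight false w = 1 := rfl

/-- The state `(changed, prev, w)` of `bvalAux` after reading `l`; `w` is the weight of the last
counter read. -/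
def bvalState : Bool → Bool → ℚ → List Bool → Bool × Bool × ℚ
  | c, p, w, [] => (c, p, w)
  | c, p, w, b :: t => bvalState (c || (b != p)) b (stepWeight (c || (b != p)) w) t

lemma bvalAux_cons (c p : Bool) (w : ℚ) (b : Bool) (t : List Bool) :
    bvalAux c p w (b :: t) = colorSign b * stepWeight (c || (b != p)) w +
      bvalAux (c || (b != p)) b (stepWeight (c || (b != p)) w) t := by
  cases b <;> simp [bvalAux, colorSign, stepWeight, apply_ite]

lemma bvalAux_true (p : Bool) (w : ℚ) (l : List Bool) :
    bvalAux true p w l = dyadicVal (w / 2) l := by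
  induction l generalizing p w with
  | nil => rfl
  | cons b t ih => simp [bvalAux_cons, ih, dyadicVal]

lemma bvalState_true_weight (p : Bool) (w : ℚ) (l : List Bool) :
    (bvalState true p w l).2.2 = w / 2 ^ l.length := by
  induction l generalizing p w with
  | nil => simp [bvalState]
  | cons b t ih => simp [bvalState, ih, pow_succ, div_div, mul_comm]

lemma neg_one_lt_colorSign_mul_bvalAux_false (b : Bool) (t : List Bool) :
    -1 < colorSign b * bvalAux false b 1 t := by
  induction t with
  | nil => simp [bvalAux]
  | cons x t ih =>
    by_cases hx : x = b
    · subst hx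
      simp only [bvalAux_cons, bne_self_eq_false, Bool.false_or, stepWeight_false, mul_add,
        mul_one, colorSign_mul_self]
      linarith
    · have hne : (x != b) = true := by simpa using hx
      have hsign : colorSign x = -colorSign b := by cases x <;> cases b <;> simp_all
      have := neg_lt_colorSign_mul b (abs_dyadicVal_lt t (by norm_num : (0 : ℚ) < 1 / 2 / 2))
      simp only [bvalAux_cons, Bool.false_or, hne, stepWeight_true, bvalAux_true, hsign, mul_add,
        neg_mul, mul_neg, ← mul_assoc, colorSign_mul_self]
      linarith

lemma colorSign_mul_bvalAux_cons_pos (c p : Bool) {w : ℚ} (hw : 0 < w) (b : Bool)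
    (t : List Bool) : 0 < colorSign b * bvalAux c p w (b :: t) := by
  rw [bvalAux_cons]
  cases hc : c || (b != p)
  · have hcp : c = false ∧ p = b := by cases c <;> cases p <;> cases b <;> simp_all
    obtain ⟨rfl, rfl⟩ := hcp
    have := neg_one_lt_colorSign_mul_bvalAux_false p t
    simp only [stepWeight_false, mul_add, mul_one, colorSign_mul_self]
    linarith
  · have := neg_lt_colorSign_mul b (abs_dyadicVal_lt t (by positivity : 0 < w / 2 / 2))
    simp only [stepWeight_true, bvalAux_true, mul_add, ← mul_assoc, colorSign_mul_self, one_mul]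
    linarith

lemma bvalState_append {c p : Bool} {w : ℚ} {x : List Bool} {c' p' : Bool} {w' : ℚ}
    (h : bvalState c p w x = (c', p', w')) (y : List Bool) :
    bvalState c p w (x ++ y) = bvalState c' p' w' y := by
  induction x generalizing c p w with
  | nil => cases h; rfl
  | cons b t ih => exact ih h

lemma bvalAux_append {c p : Bool} {w : ℚ} {x : List Bool} {c' p' : Bool} {w' : ℚ}
    (h : bvalState c p w x = (c', p', w')) (y : List Bool) :
    bvalAux c p w (x ++ y) = bvalAux c p w x + bvalAux c' p' w' y := by
  induction x generalizing c p w with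
  | nil => cases h; simp [bvalAux]
  | cons b t ih => rw [List.cons_append, bvalAux_cons, bvalAux_cons, ih h, add_assoc]

lemma bvalState_weight_pos (c p : Bool) {w : ℚ} (hw : 0 < w) (l : List Bool) :
    0 < (bvalState c p w l).2.2 := by
  induction l generalizing c p w with
  | nil => exact hw
  | cons b t ih =>
    refine ih _ _ ?_
    cases c || (b != p) <;> simp [stepWeight, hw]

lemma bval_eq_bvalAux (l : List Bool) : bval l = bvalAux false l.headI 1 l := by
  cases l with
  | nil => rfl
  | cons b t => simp [bval, bvalAux_cons, colorSign]

def topWeight (l : List Bool) : ℚ := (bvalState false l.headI 1 l).2.2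

lemma bval_append {x y : List Bool} {c p : Bool} {w : ℚ}
    (h : bvalState false (x ++ y).headI 1 x = (c, p, w)) :
    bval (x ++ y) = bval x + bvalAux c p w y := by
  rw [bval_eq_bvalAux, bvalAux_append h]
  cases x with
  | nil => rfl
  | cons b t => rw [bval_eq_bvalAux]; rfl

lemma topWeight_append {x y : List Bool} {c p : Bool} {w : ℚ}
    (h : bvalState false (x ++ y).headI 1 x = (c, p, w)) :
    topWeight (x ++ y) = (bvalState c p w y).2.2 := by
  rw [topWeight, bvalState_append h]

lemma colorSign_mul_bval_lt_append_cons (x : List Bool) (b : Bool) (y : List Bool) :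
    colorSign b * bval x < colorSign b * bval (x ++ b :: y) := by
  obtain ⟨⟨c, p, w⟩, hs⟩ : ∃ s, bvalState false (x ++ b :: y).headI 1 x = s :=
    ⟨_, rfl⟩
  have hw : 0 < w := by
    simpa [hs] using bvalState_weight_pos false (x ++ b :: y).headI one_pos x
  rw [bval_append hs, mul_add]
  linarith [colorSign_mul_bvalAux_cons_pos c p hw b y]

lemma dyadicVal_replicate (w : ℚ) (k : ℕ) (b : Bool) :
    dyadicVal w (List.replicate k b) = colorSign b * (2 * w - 2 * w / 2 ^ k) := by
  induction k generalizing w with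
  | zero => simp [dyadicVal]
  | succ k ih => rw [List.replicate_succ, dyadicVal, ih, pow_succ]; ring

lemma bvalAux_cons_replicate_not (c p : Bool) (w : ℚ) (b : Bool) (r : ℕ) :
    bvalAux c p w (b :: List.replicate r (!b)) =
      colorSign b * (bvalState c p w (b :: List.replicate r (!b))).2.2 := by
  rw [bvalAux_cons, bvalState]
  cases r with
  | zero => simp [bvalAux, bvalState]
  | succ k =>
    have hchange : ((c || (b != p)) || ((!b) != b)) = true := by cases b <;> simp
    rw [List.replicate_succ, bvalAux_cons, bvalState, hchange, bvalAux_true,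
      bvalState_true_weight, dyadicVal_replicate, colorSign_not, List.length_replicate]
    simp only [stepWeight_true]
    ring

lemma exists_eq_append_cons_replicate_not {b : Bool} {l : List Bool} (hb : b ∈ l) :
    ∃ x r, l = x ++ b :: List.replicate r (!b) := by
  induction l with
  | nil => simp at hb
  | cons y t ih =>
    by_cases hbt : b ∈ t
    · obtain ⟨x, r, rfl⟩ := ih hbt
      exact ⟨y :: x, r, rfl⟩
    · have hy : y = b := by simpa [hbt, eq_comm] using hb
      refine ⟨[], t.length, ?_⟩
      rw [List.nil_append, hy, ← List.eq_replicate_iff.mpr ⟨rfl, ?_⟩]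
      intro z hz
      cases z <;> cases b <;> simp_all

lemma exists_bval_eq_sub_topWeight {b : Bool} {l : List Bool} (hb : b ∈ l) :
    ∃ x y, l = x ++ b :: y ∧ bval x = bval l - colorSign b * topWeight l := by
  obtain ⟨x, r, rfl⟩ := exists_eq_append_cons_replicate_not hb
  refine ⟨x, _, rfl, ?_⟩
  obtain ⟨⟨c, p, w⟩, hs⟩ :
      ∃ s, bvalState false (x ++ b :: List.replicate r (!b)).headI 1 x = s := ⟨_, rfl⟩
  rw [bval_append hs, topWeight_append hs, bvalAux_cons_replicate_not]
  ring

open AddSubgroup in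
/-- Weights only halve, or restart at `1` from `1`. -/
lemma bvalAux_mem_zmultiples_bvalState_weight (l : List Bool) (c p : Bool) (w : ℚ)
    (hw : c = false → w = 1) :
    bvalAux c p w l ∈ zmultiples (bvalState c p w l).2.2 ∧
      w ∈ zmultiples (bvalState c p w l).2.2 := by
  induction l generalizing c p w with
  | nil => exact ⟨zero_mem _, mem_zmultiples w⟩
  | cons b t ih =>
    have hw' : (c || (b != p)) = false → stepWeight (c || (b != p)) w = 1 := by
      intro h; rw [h, stepWeight_false]
    obtain ⟨hval, hstep⟩ := ih (c || (b != p)) b _ hw'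
    rw [bvalAux_cons, bvalState]
    refine ⟨add_mem ?_ hval, ?_⟩
    · cases b
      · simpa using neg_mem hstep
      · simpa using hstep
    · cases hc : c || (b != p)
      · rw [hw (by simp_all)]; simpa [hc] using hstep
      · simpa [hc, two_mul] using add_mem hstep hstep

lemma bval_mem_zmultiples_topWeight (l : List Bool) :
    bval l ∈ AddSubgroup.zmultiples (topWeight l) := by
  rw [bval_eq_bvalAux]
  exact (bvalAux_mem_zmultiples_bvalState_weight l false l.headI 1 fun _ => rfl).1

lemma exists_bvalState_weight_eq_div_pow (l : List Bool) (c p : Bool) (w : ℚ)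
    (hw : c = false → w = 1) : ∃ k : ℕ, (bvalState c p w l).2.2 = w / 2 ^ k := by
  induction l generalizing c p w with
  | nil => exact ⟨0, by simp [bvalState]⟩
  | cons b t ih =>
    have hw' : (c || (b != p)) = false → stepWeight (c || (b != p)) w = 1 := by
      intro h; rw [h, stepWeight_false]
    obtain ⟨k, hk⟩ := ih (c || (b != p)) b _ hw'
    rw [bvalState, hk]
    cases hc : c || (b != p)
    · exact ⟨k, by rw [hw (by simp_all), stepWeight_false]⟩
    · exact ⟨k + 1, by rw [stepWeight_true, pow_succ]; ring⟩

lemma exists_topWeight_eq_inv_pow (l : List Bool) : ∃ k : ℕ, topWeight l = (2 ^ k)⁻¹ := by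
  simpa [topWeight] using exists_bvalState_weight_eq_div_pow l false l.headI 1 fun _ => rfl

lemma topWeight_pos (l : List Bool) : 0 < topWeight l := by
  obtain ⟨k, hk⟩ := exists_topWeight_eq_inv_pow l
  rw [hk]
  positivity

lemma topWeight_le_one (l : List Bool) : topWeight l ≤ 1 := by
  obtain ⟨k, hk⟩ := exists_topWeight_eq_inv_pow l
  rw [hk]
  exact inv_le_one_of_one_le₀ (one_le_pow₀ one_le_two)

lemma topWeight_mem_zmultiples_of_le {l m : List Bool} (h : topWeight m ≤ topWeight l) :
    topWeight l ∈ AddSubgroup.zmultiples (topWeight m) := by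
  obtain ⟨k, hk⟩ := exists_topWeight_eq_inv_pow l
  obtain ⟨n, hn⟩ := exists_topWeight_eq_inv_pow m
  rw [hk, hn] at h ⊢
  have hkn : k ≤ n :=
    (pow_le_pow_iff_right₀ one_lt_two).mp ((inv_le_inv₀ (by positivity) (by positivity)).mp h)
  obtain ⟨d, rfl⟩ := Nat.exists_eq_add_of_le hkn
  refine ⟨(2 ^ d : ℕ), ?_⟩
  dsimp only
  rw [zsmul_eq_mul, pow_add]
  push_cast
  field_simp

lemma bvalState_of_forall_eq (p : Bool) {l : List Bool} (h : ∀ y ∈ l, y = p) :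
    bvalState false p 1 l = (false, p, 1) := by
  induction l with
  | nil => rfl
  | cons b t ih =>
    obtain rfl := h b List.mem_cons_self
    simpa [bvalState] using ih fun y hy => h y (List.mem_cons_of_mem _ hy)

lemma mem_of_topWeight_ne_one {l : List Bool} (h : topWeight l ≠ 1) (b : Bool) : b ∈ l := by
  obtain ⟨x, hx, hne⟩ : ∃ x ∈ l, x ≠ l.headI := by
    by_contra! hall
    exact h (by rw [topWeight, bvalState_of_forall_eq _ hall])
  have hhead : l.headI ∈ l := by cases l <;> simp_all
  cases b <;> cases x <;> cases hl : l.headI <;> simp_all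

lemma mem_of_colorSign_mul_bval_pos {b : Bool} {l : List Bool}
    (h : 0 < colorSign b * bval l) : b ∈ l := by
  cases l with
  | nil => simp [bval] at h
  | cons x t =>
    have hx := colorSign_mul_bval_lt_append_cons [] x t
    by_contra hb
    have hxb : colorSign x = -colorSign b := by cases x <;> cases b <;> simp_all
    simp only [bval, mul_zero, List.nil_append, hxb, neg_mul] at hx h
    linarith

lemma le_of_pos_of_mem_zmultiples {R : Type*} [Ring R] [LinearOrder R] [IsStrictOrderedRing R]
    {q x : R} (hq : 0 < q) (hx : 0 < x) (h : x ∈ AddSubgroup.zmultiples q) : q ≤ x := by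
  obtain ⟨n, rfl⟩ := AddSubgroup.mem_zmultiples_iff.mp h
  rw [zsmul_eq_mul] at hx ⊢
  have hn : (1 : R) ≤ n := by exact_mod_cast (pos_of_mul_pos_left hx hq.le : (0 : R) < n)
  simpa using mul_le_mul_of_nonneg_right hn hq.le

lemma bvalPos_cons_erase {l : List Bool} {s : Multiset (List Bool)} (hl : l ∈ s)
    (l' : List Bool) : bvalPos (l' ::ₘ s.erase l) = bvalPos s - bval l + bval l' := by
  conv_rhs => rw [← Multiset.cons_erase hl]
  simp only [bvalPos, Multiset.map_cons, Multiset.sum_cons]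
  ring

lemma getD_eq_iff_exists_append_cons {l : List Bool} {j : ℕ} {b : Bool} :
    l.getD j (!b) = b ↔ ∃ y, l = l.take j ++ b :: y := by
  constructor
  · intro h
    have hj : j < l.length := by
      by_contra! hj
      rw [List.getD_eq_default _ _ hj] at h
      cases b <;> simp at h
    refine ⟨l.drop (j + 1), ?_⟩
    rw [List.getD_eq_getElem _ _ hj] at h
    rw [← h, ← List.drop_eq_getElem_cons hj, List.take_append_drop]
  · rintro ⟨y, hy⟩
    rw [hy, List.getD_append_right _ _ _ _ (List.length_take_le _ _)]
    have : (l.take j).length = j := by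
      have := congrArg List.length hy
      simp only [List.length_append, List.length_cons, List.length_take] at this ⊢
      omega
    simp [this]

lemma hMove_iff (c : Bool) (s t : Multiset (List Bool)) :
    HMove c s t ↔ ∃ x y, x ++ c :: y ∈ s ∧ t = x ::ₘ s.erase (x ++ c :: y) := by
  constructor
  · rintro ⟨l, hl, j, hj, rfl⟩
    obtain ⟨y, hy⟩ := getD_eq_iff_exists_append_cons.mp hj
    exact ⟨l.take j, y, hy ▸ hl, by rw [← hy]⟩
  · rintro ⟨x, y, hxy, rfl⟩
    refine ⟨_, hxy, x.length, getD_eq_iff_exists_append_cons.mpr ⟨y, ?_⟩, ?_⟩ <;>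
      simp [List.take_left']

lemma HMove.colorSign_mul_bvalPos_lt {c : Bool} {s t : Multiset (List Bool)}
    (h : HMove c s t) : colorSign c * bvalPos t < colorSign c * bvalPos s := by
  obtain ⟨x, y, hxy, rfl⟩ := (hMove_iff c s t).mp h
  rw [bvalPos_cons_erase hxy]
  linarith [colorSign_mul_bval_lt_append_cons x c y]

def numCounters (s : Multiset (List Bool)) : ℕ := (s.map List.length).sum

lemma HMove.numCounters_lt {c : Bool} {s t : Multiset (List Bool)} (h : HMove c s t) :
    numCounters t < numCounters s := by
  obtain ⟨x, y, hxy, rfl⟩ := (hMove_iff c s t).mp h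
  conv_rhs => rw [numCounters, ← Multiset.cons_erase hxy]
  simp [numCounters]

lemma bvalPos_mem_zmultiples {q : ℚ} {s : Multiset (List Bool)}
    (h : ∀ l ∈ s, bval l ∈ AddSubgroup.zmultiples q) :
    bvalPos s ∈ AddSubgroup.zmultiples q :=
  AddSubgroup.multiset_sum_mem _ _ (by simpa using h)

lemma exists_mem_colorSign_mul_bval_pos {c : Bool} {s : Multiset (List Bool)}
    (h : 0 < colorSign c * bvalPos s) : ∃ l ∈ s, 0 < colorSign c * bval l := by
  by_contra! hs
  have := Multiset.sum_map_le_sum_map _ (fun _ => (0 : ℚ)) hs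
  rw [Multiset.sum_map_mul_left] at this
  simp only [Multiset.map_const', Multiset.sum_replicate, smul_zero] at this
  exact this.not_gt h

/-- The string realising the smallest top weight `q` is bichromatic when `q < 1`; otherwise any
string of positive value will do. -/
lemma exists_hMove_colorSign_mul_bvalPos_nonneg {c : Bool} {s : Multiset (List Bool)}
    (h : 0 < colorSign c * bvalPos s) : ∃ t, HMove c s t ∧ 0 ≤ colorSign c * bvalPos t := by
  have hs : s ≠ 0 := by rintro rfl; simp [bvalPos] at h
  obtain ⟨m, hm, hmin⟩ := Multiset.exists_min_image topWeight hs
  have hmul : bvalPos s ∈ AddSubgroup.zmultiples (topWeight m) :=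
    bvalPos_mem_zmultiples fun l hl => AddSubgroup.zmultiples_le.mpr
      (topWeight_mem_zmultiples_of_le (hmin l hl)) (bval_mem_zmultiples_topWeight l)
  have hq : topWeight m ≤ colorSign c * bvalPos s := by
    refine le_of_pos_of_mem_zmultiples (topWeight_pos m) h ?_
    cases c
    · simpa using neg_mem hmul
    · simpa using hmul
  obtain ⟨l, hl, hcl, hle⟩ :
      ∃ l ∈ s, c ∈ l ∧ topWeight l ≤ colorSign c * bvalPos s := by
    by_cases hq1 : topWeight m = 1
    · obtain ⟨l, hl, hpos⟩ := exists_mem_colorSign_mul_bval_pos h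
      exact ⟨l, hl, mem_of_colorSign_mul_bval_pos hpos, by linarith [topWeight_le_one l]⟩
    · exact ⟨m, hm, mem_of_topWeight_ne_one hq1 c, hq⟩
  obtain ⟨x, y, rfl, hx⟩ := exists_bval_eq_sub_topWeight hcl
  refine ⟨_, (hMove_iff c s _).mpr ⟨x, y, hl, rfl⟩, ?_⟩
  rw [bvalPos_cons_erase hl, hx]
  linear_combination hle + topWeight (x ++ c :: y) * colorSign_mul_self c

theorem wins_of_colorSign_mul_bvalPos (c : Bool) (s : Multiset (List Bool)) :
    (0 ≤ colorSign c * bvalPos s → Wins c (!c) s) ∧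
      (0 < colorSign c * bvalPos s → Wins c c s) := by
  refine ⟨fun h => Wins.oppMove c s fun t ht => ?_, fun h => ?_⟩
  · have := ht.colorSign_mul_bvalPos_lt
    rw [colorSign_not] at this
    exact (wins_of_colorSign_mul_bvalPos c t).2 (by linarith)
  · obtain ⟨t, ht, hnonneg⟩ := exists_hMove_colorSign_mul_bvalPos_nonneg h
    exact Wins.myMove c s t ht ((wins_of_colorSign_mul_bvalPos c t).1 hnonneg)
termination_by numCounters s
decreasing_by all_goals exact ht.numCounters_lt

/-- Outcome of sums of hackenbush strings: positive value means Blue wins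
(moving first or second), negative value means Red wins, zero value means the
second player wins. Moreover (i) from a position of value ≥ 0 every Red move
yields value > 0, and (ii) from a position of value > 0 Blue has a move to a
position of value ≥ 0. -/
theorem stmt13 (s : Multiset (List Bool)) :
    (0 < bvalPos s → Wins true true s ∧ Wins true false s) ∧
    (bvalPos s < 0 → Wins false false s ∧ Wins false true s) ∧
    (bvalPos s = 0 → Wins true false s ∧ Wins false true s) ∧
    (0 ≤ bvalPos s → ∀ t, HMove false s t → 0 < bvalPos t) ∧
    (0 < bvalPos s → ∃ t, HMove true s t ∧ 0 ≤ bvalPos t) := by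
  have hBlue := wins_of_colorSign_mul_bvalPos true s
  have hRed := wins_of_colorSign_mul_bvalPos false s
  simp only [colorSign_true, colorSign_false, one_mul, neg_mul, neg_nonneg, neg_pos,
    Bool.not_true, Bool.not_false] at hBlue hRed
  refine ⟨fun h => ⟨hBlue.2 h, hBlue.1 h.le⟩, fun h => ⟨hRed.2 h, hRed.1 h.le⟩,
    fun h => ⟨hBlue.1 h.ge, hRed.1 h.le⟩, fun h t ht => ?_, fun h => ?_⟩
  · have := ht.colorSign_mul_bvalPos_lt
    simp only [colorSign_false, neg_mul, one_mul, neg_lt_neg_iff] at this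
    linarith
  · simpa using exists_hMove_colorSign_mul_bvalPos_nonneg (c := true) (by simpa using h)
end
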